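/- Let n ≥ 4, let G be a triangle-free connected graph with χ(G) = k ≥ 3, and let G* = (G ⊠ K_{n-1}) ∨ K_{(n-3)(n-1)} (strong product with K_{n-1}, then join with (n-3)(n-1) universal vertices). Then W^-(G*, K_n) = n-1, i.e., the minimum number of colors in a K_n-WORM coloring of G* is n-1. -/

import Mathlib

/-!
Lower bound: for an edge `ab` of `G`, the blown-up cliques of `a` and `b` together with the
universal vertices form a clique of size `(n-1)^2` in `G*`. A `K_n`-WORM coloring meets it in
color classes of size at most `n-1`, so it uses at least `n-1` colors.

Upper bound: color the `i`-th vertex of every blown-up clique by `i`, and split the universal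
vertices into `n-1` blocks of `n-3`, one block per color. No `K_n` is rainbow since there are
only `n-1` colors. A monochromatic clique contains at most `n-3` universal vertices, and its
other vertices lie in distinct blown-up cliques whose vertices of `G` form a clique of `G`, so
there are at most `2` of them because `G` is triangle-free.
-/

open SimpleGraph

/-- A vertex coloring `c` is a `K_n`-WORM coloring of `G` if no set of `n`
pairwise adjacent vertices is monochromatic and none is rainbow. -/
def IsKnWORM {β : Type*} (G : SimpleGraph β) (n : ℕ) (c : β → ℕ) : Prop :=
  ∀ s : Finset β, G.IsNClique n s →
    (∃ u ∈ s, ∃ v ∈ s, c u ≠ c v) ∧ (∃ u ∈ s, ∃ v ∈ s, u ≠ v ∧ c u = c v)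

/-- The strong product `G ⊠ H`. -/
def strongProd {α β : Type*} (G : SimpleGraph α) (H : SimpleGraph β) :
    SimpleGraph (α × β) where
  Adj x y := x ≠ y ∧ (x.1 = y.1 ∨ G.Adj x.1 y.1) ∧ (x.2 = y.2 ∨ H.Adj x.2 y.2)
  symm := ⟨by
    rintro x y ⟨h1, h2, h3⟩
    exact ⟨h1.symm, h2.imp Eq.symm (fun h => G.symm.symm _ _ h), h3.imp Eq.symm (fun h => H.symm.symm _ _ h)⟩⟩
  loopless := ⟨fun x h => h.1 rfl⟩

/-- The join `G ∨ H`: disjoint union together with all edges between the parts. -/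
def graphJoin {α β : Type*} (G : SimpleGraph α) (H : SimpleGraph β) :
    SimpleGraph (α ⊕ β) where
  Adj x y :=
    match x, y with
    | .inl a, .inl b => G.Adj a b
    | .inr a, .inr b => H.Adj a b
    | _, _ => True
  symm := ⟨by rintro (a | a) (b | b) h <;> simp_all [SimpleGraph.adj_comm]⟩
  loopless := ⟨by rintro (a | a) h <;> simp_all⟩

/-- The graph `G* = (G ⊠ K_{n-1}) ∨ K_{(n-3)(n-1)}`. -/
def Gstar {V : Type*} (G : SimpleGraph V) (n : ℕ) :
    SimpleGraph ((V × Fin (n - 1)) ⊕ Fin ((n - 3) * (n - 1))) :=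
  graphJoin (strongProd G (⊤ : SimpleGraph (Fin (n - 1)))) (⊤ : SimpleGraph (Fin ((n - 3) * (n - 1))))

open Finset

section WORM

variable {β : Type*} {H : SimpleGraph β} {n : ℕ} {c : β → ℕ}

theorem IsKnWORM.card_filter_lt (hc : IsKnWORM H n c) {T : Finset β}
    (hT : H.IsClique (T : Set β)) (b : ℕ) : #{x ∈ T | c x = b} < n := by
  by_contra! h
  obtain ⟨s, hsT, hs⟩ := exists_subset_card_eq h
  obtain ⟨⟨u, hu, v, hv, huv⟩, -⟩ :=
    hc s ⟨hT.subset (coe_subset.2 (hsT.trans (filter_subset _ _))), hs⟩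
  exact huv ((mem_filter.1 (hsT hu)).2.trans (mem_filter.1 (hsT hv)).2.symm)

theorem IsKnWORM.card_le_mul_ncard_range [Finite β] (hc : IsKnWORM H n c) {T : Finset β}
    (hT : H.IsClique (T : Set β)) : #T ≤ (n - 1) * (Set.range c).ncard := by
  calc #T ≤ (n - 1) * #(T.image c) :=
        card_le_mul_card_image T _ fun b _ => Nat.le_sub_one_of_lt (hc.card_filter_lt hT b)
    _ ≤ (n - 1) * (Set.range c).ncard := by
        gcongr
        rw [← Set.ncard_coe_finset, coe_image]
        exact Set.ncard_le_ncard (Set.image_subset_range c T) (Set.finite_range c)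

theorem isKnWORM_of_forall_lt (hlt : ∀ x, c x < n - 1)
    (hmono : ∀ s : Finset β, H.IsClique (s : Set β) → ∀ b, #{x ∈ s | c x = b} < n) :
    IsKnWORM H n c := by
  intro s hs
  have hpos : 0 < n := by simpa using hmono ∅ (by simp) 0
  refine ⟨?_, ?_⟩
  · by_contra! hconst
    obtain ⟨u, hu⟩ := card_pos.1 (hs.2 ▸ hpos)
    have := hmono s hs.1 (c u)
    rw [filter_true_of_mem fun v hv => hconst v hv u hu, hs.2] at this
    exact lt_irrefl n this
  · exact exists_ne_map_eq_of_card_lt_of_maps_to (t := range (n - 1))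
      (by rw [card_range, hs.2]; omega) fun x _ => by simpa using hlt x

end WORM

theorem ncard_range_le_of_forall_lt {α : Type*} {f : α → ℕ} {m : ℕ} (h : ∀ x, f x < m) :
    (Set.range f).ncard ≤ m :=
  calc (Set.range f).ncard ≤ ((range m : Finset ℕ) : Set ℕ).ncard :=
        Set.ncard_le_ncard (by rintro _ ⟨x, rfl⟩; simpa using h x) (range m).finite_toSet
    _ = m := by simp

theorem card_le_of_forall_div_eq {d b : ℕ} (hd : 0 < d) {u : Finset ℕ}
    (hu : ∀ j ∈ u, j / d = b) : #u ≤ d :=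
  calc #u ≤ #(Ico (d * b) (d * b + d)) := card_le_card fun j hj => by
          have hdiv := Nat.div_add_mod j d
          have hmod := Nat.mod_lt j hd
          rw [hu j hj] at hdiv
          rw [mem_Ico]
          omega
    _ = d := by simp

namespace SimpleGraph

variable {α γ : Type*} {G : SimpleGraph α} {H : SimpleGraph γ}

theorem IsClique.strongProd {s : Set α} {t : Set γ} (hs : G.IsClique s) (ht : H.IsClique t) :
    (strongProd G H).IsClique (s ×ˢ t) := by
  intro x hx y hy hxy
  refine ⟨hxy, ?_, ?_⟩
  · by_cases h : x.1 = y.1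
    exacts [Or.inl h, Or.inr (hs hx.1 hy.1 h)]
  · by_cases h : x.2 = y.2
    exacts [Or.inl h, Or.inr (ht hx.2 hy.2 h)]

theorem card_le_two_of_isClique_strongProd (hG : G.CliqueFree 3) {t : Finset (α × γ)}
    (ht : (strongProd G H).IsClique (t : Set (α × γ)))
    (hsnd : ∀ p ∈ t, ∀ q ∈ t, p.2 = q.2) : #t ≤ 2 := by
  classical
  have hinj : Set.InjOn Prod.fst (t : Set (α × γ)) :=
    fun p hp q hq h => Prod.ext h (hsnd p hp q hq)
  have hclique : G.IsClique (t.image Prod.fst : Set α) := by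
    rw [coe_image]
    rintro _ ⟨p, hp, rfl⟩ _ ⟨q, hq, rfl⟩ hne
    exact (ht hp hq fun h => hne (h ▸ rfl)).2.1.resolve_left hne
  by_contra! h
  rw [← card_image_of_injOn hinj] at h
  obtain ⟨u, hu, hu3⟩ := exists_subset_card_eq h
  exact hG u ⟨hclique.subset (coe_subset.2 hu), hu3⟩

theorem IsClique.disjSum {s : Finset α} {t : Finset γ} (hs : G.IsClique (s : Set α))
    (ht : H.IsClique (t : Set γ)) : (graphJoin G H).IsClique (s.disjSum t : Set (α ⊕ γ)) := by
  rintro (a | a) ha (b | b) hb hab <;> simp only [mem_coe, inl_mem_disjSum, inr_mem_disjSum] at ha hb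
  · exact hs ha hb fun h => hab (congrArg Sum.inl h)
  · trivial
  · trivial
  · exact ht ha hb fun h => hab (congrArg Sum.inr h)

theorem IsClique.toLeft {u : Finset (α ⊕ γ)} (hu : (graphJoin G H).IsClique (u : Set (α ⊕ γ))) :
    G.IsClique (u.toLeft : Set α) :=
  fun _ ha _ hb hab => hu (mem_toLeft.1 ha) (mem_toLeft.1 hb) (Sum.inl_injective.ne hab)

end SimpleGraph

section Gstar

variable {V : Type*} {G : SimpleGraph V} {n : ℕ}

theorem Gstar.exists_isClique_card_eq (hn : 3 ≤ n) {a b : V} (hab : G.Adj a b) :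
    ∃ T : Finset ((V × Fin (n - 1)) ⊕ Fin ((n - 3) * (n - 1))),
      (Gstar G n).IsClique (T : Set _) ∧ #T = (n - 1) * (n - 1) := by
  classical
  refine ⟨(({a, b} : Finset V) ×ˢ univ).disjSum univ, ?_, ?_⟩
  · refine IsClique.disjSum ?_ (by simp)
    rw [coe_product, coe_pair, coe_univ]
    exact IsClique.strongProd (isClique_pair.2 fun _ => hab) (by simp)
  · rw [card_disjSum, card_product, card_pair hab.ne, card_univ, card_univ, Fintype.card_fin,
      Fintype.card_fin, ← Nat.add_mul]
    congr 1
    omega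

variable (V n) in
def wormColoring : (V × Fin (n - 1)) ⊕ Fin ((n - 3) * (n - 1)) → ℕ :=
  Sum.elim (fun p => p.2) (fun j => j / (n - 3))

theorem wormColoring_lt (x : (V × Fin (n - 1)) ⊕ Fin ((n - 3) * (n - 1))) :
    wormColoring V n x < n - 1 := by
  rcases x with p | j
  · exact p.2.isLt
  · exact Nat.div_lt_of_lt_mul j.isLt

theorem card_filter_wormColoring_lt (hn : 4 ≤ n) (hG : G.CliqueFree 3)
    {s : Finset ((V × Fin (n - 1)) ⊕ Fin ((n - 3) * (n - 1)))}
    (hs : (Gstar G n).IsClique (s : Set _)) (b : ℕ) :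
    #{x ∈ s | wormColoring V n x = b} < n := by
  set f := {x ∈ s | wormColoring V n x = b}
  have hf : (Gstar G n).IsClique (f : Set _) := hs.subset (coe_subset.2 (filter_subset _ _))
  have hleft : #f.toLeft ≤ 2 := by
    refine card_le_two_of_isClique_strongProd hG (IsClique.toLeft hf) fun p hp q hq => ?_
    have hpb := (mem_filter.1 (mem_toLeft.1 hp)).2
    have hqb := (mem_filter.1 (mem_toLeft.1 hq)).2
    exact Fin.ext (hpb.trans hqb.symm)
  have hright : #f.toRight ≤ n - 3 := by
    rw [← card_map Fin.valEmbedding]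
    refine card_le_of_forall_div_eq (by omega) (b := b) fun j hj => ?_
    obtain ⟨i, hi, rfl⟩ := mem_map.1 hj
    exact (mem_filter.1 (mem_toRight.1 hi)).2
  rw [← card_toLeft_add_card_toRight]
  omega

theorem isKnWORM_wormColoring (hn : 4 ≤ n) (hG : G.CliqueFree 3) :
    IsKnWORM (Gstar G n) n (wormColoring V n) :=
  isKnWORM_of_forall_lt wormColoring_lt fun _ hs => card_filter_wormColoring_lt hn hG hs

end Gstar

theorem stmt11_general {V : Type} [Fintype V] (n k : ℕ) (hn : 4 ≤ n)
    (G : SimpleGraph V) (htf : G.CliqueFree 3)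
    (hk : 3 ≤ k) (hχ : G.chromaticNumber = (k : ℕ∞)) :
    sInf {s | ∃ c : (V × Fin (n - 1)) ⊕ Fin ((n - 3) * (n - 1)) → ℕ,
        IsKnWORM (Gstar G n) n c ∧ (Set.range c).ncard = s} = n - 1 := by
  obtain ⟨a, b, hab⟩ : ∃ a b, G.Adj a b := by
    refine ne_bot_iff_exists_adj.1 (two_le_chromaticNumber_iff_ne_bot.1 ?_)
    rw [hχ]
    exact_mod_cast (by omega : 2 ≤ k)
  obtain ⟨T, hT, hTcard⟩ := Gstar.exists_isClique_card_eq (n := n) (by omega) hab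
  have hworm := isKnWORM_wormColoring hn htf
  apply le_antisymm
  · refine (Nat.sInf_le ?_).trans (ncard_range_le_of_forall_lt (wormColoring_lt (V := V)))
    exact ⟨_, hworm, rfl⟩
  · refine le_csInf ⟨_, _, hworm, rfl⟩ ?_
    rintro _ ⟨c, hc, rfl⟩
    exact Nat.le_of_mul_le_mul_left (hTcard ▸ hc.card_le_mul_ncard_range hT) (by omega)

/-- Let `n ≥ 4`, `G` a triangle-free connected graph with `χ(G) = k ≥ 3`, and
`G* = (G ⊠ K_{n-1}) ∨ K_{(n-3)(n-1)}`. Then `W^-(G*, K_n) = n-1`: the minimum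
number of colors in a `K_n`-WORM coloring of `G*` equals `n-1`. -/
theorem stmt11 {V : Type} [Fintype V] (n k : ℕ) (hn : 4 ≤ n)
    (G : SimpleGraph V) (htf : G.CliqueFree 3) (hconn : G.Connected)
    (hk : 3 ≤ k) (hχ : G.chromaticNumber = (k : ℕ∞)) :
    sInf {s | ∃ c : (V × Fin (n - 1)) ⊕ Fin ((n - 3) * (n - 1)) → ℕ,
        IsKnWORM (Gstar G n) n c ∧ (Set.range c).ncard = s} = n - 1 :=
  stmt11_general n k hn G htf hk hχ
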